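/- arXiv:2602.07486 — 3 statements merged into one kernel-verified Lean document; each statement's English description precedes it below -/
import Mathlib

section
/- Let Pf, Pm, γf, γm, ATEf, ATEm be real numbers with Pf ≠ 0, Pm ≠ 0, Pf − γf ≠ 0, Pm − γm ≠ 0, and suppose the NTD assumption γf/Pf = γm/Pm holds. Define θg = ATEg/Pg and the normalized DID estimand δθ(g) = (ATEg + γg)/(Pg − γg) for g ∈ {f, m}. Then δθ(f) − δθ(m) = Bias · (θf − θm), where Bias = Pf/(Pf − γf) = Pm/(Pm − γm). In particular, the descriptive gender gap in normalized DID equals a gender-invariant multiplicative bias factor times the causal gender gap in normalized effects. -/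
/-!
Write `ρ = γ / P` for the normalized parallel-trends violation. Dividing numerator and
denominator by `P` gives `P / (P - γ) = (1 - ρ)⁻¹` and `(ATE + γ) / (P - γ) = (θ + ρ) / (1 - ρ)`.
Under NTD-PT both genders share the same `ρ`, so the two normalized DID estimands are affine
images of `θf` and `θm` under one and the same map `θ ↦ (θ + ρ) / (1 - ρ)`, whose slope is the
common bias factor `(1 - ρ)⁻¹`.
-/

section NormalizedTrend

variable {K : Type*} [Field K] {P : K}

theorem div_sub_eq_inv_one_sub_div (hP : P ≠ 0) (γ : K) : P / (P - γ) = (1 - γ / P)⁻¹ := by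
  rw [one_sub_div hP, inv_div]

theorem add_div_sub_eq_div_one_sub_div (hP : P ≠ 0) (A γ : K) :
    (A + γ) / (P - γ) = (A / P + γ / P) / (1 - γ / P) := by
  rw [← div_div_div_cancel_right₀ hP, add_div, sub_div, div_self hP]

end NormalizedTrend

theorem stmt_4_general (Pf Pm γf γm ATEf ATEm : ℝ)
    (hPf : Pf ≠ 0) (hPm : Pm ≠ 0)
    (hNTD : γf / Pf = γm / Pm)
    (θf θm δθf δθm : ℝ)
    (hθf : θf = ATEf / Pf) (hθm : θm = ATEm / Pm)
    (hδθf : δθf = (ATEf + γf) / (Pf - γf))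
    (hδθm : δθm = (ATEm + γm) / (Pm - γm)) :
    δθf - δθm = (Pf / (Pf - γf)) * (θf - θm) ∧
      Pf / (Pf - γf) = Pm / (Pm - γm) := by
  subst hθf hθm hδθf hδθm
  rw [add_div_sub_eq_div_one_sub_div hPf, add_div_sub_eq_div_one_sub_div hPm,
    div_sub_eq_inv_one_sub_div hPf, div_sub_eq_inv_one_sub_div hPm, ← hNTD]
  exact ⟨by rw [div_sub_div_same, add_sub_add_right_eq_sub, div_eq_inv_mul], rfl⟩

/-- Theorem 1 (bias characterization): under Assumption NTD-PT, the descriptive gender gap in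
normalized DID equals a gender-invariant multiplicative bias factor times the causal gender
gap in normalized effects. -/
theorem stmt_4 (Pf Pm γf γm ATEf ATEm : ℝ)
    (hPf : Pf ≠ 0) (hPm : Pm ≠ 0)
    (hf : Pf - γf ≠ 0) (hm : Pm - γm ≠ 0)
    (hNTD : γf / Pf = γm / Pm)
    (θf θm δθf δθm : ℝ)
    (hθf : θf = ATEf / Pf) (hθm : θm = ATEm / Pm)
    (hδθf : δθf = (ATEf + γf) / (Pf - γf))
    (hδθm : δθm = (ATEm + γm) / (Pm - γm)) :
    δθf - δθm = (Pf / (Pf - γf)) * (θf - θm) ∧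
      Pf / (Pf - γf) = Pm / (Pm - γm) :=
  stmt_4_general Pf Pm γf γm ATEf ATEm hPf hPm hNTD θf θm δθf δθm hθf hθm hδθf hδθm
end

section
/- Let Pf, γf, γm, ATEf, ATEm be real numbers with Pf ≠ 0 and Pf − γf ≠ 0. Define P = (ATEf − ATEm)/Pf and δP = ((ATEf + γf) − (ATEm + γm))/(Pf − γf). Then δP = P · Bias1 + Bias2, where Bias1 = Pf/(Pf − γf) and Bias2 = (γf − γm)/(Pf − γf). -/
theorem stmt_5_general (Pf γf γm ATEf ATEm : ℝ)
    (hPf : Pf ≠ 0)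
    (P δP Bias1 Bias2 : ℝ)
    (hP : P = (ATEf - ATEm) / Pf)
    (hδP : δP = ((ATEf + γf) - (ATEm + γm)) / (Pf - γf))
    (hB1 : Bias1 = Pf / (Pf - γf))
    (hB2 : Bias2 = (γf - γm) / (Pf - γf)) :
    δP = P * Bias1 + Bias2 := by
  rw [hδP, hP, hB1, hB2, div_mul_div_cancel₀ hPf, ← add_div]
  ring

/-- Lemma C.2: the descriptive DID analogue of the Kleven–Landais–Søgaard child-penalty
estimand equals the causal estimand times a multiplicative bias plus an additive bias. -/
theorem stmt_5 (Pf γf γm ATEf ATEm : ℝ)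
    (hPf : Pf ≠ 0) (hf : Pf - γf ≠ 0)
    (P δP Bias1 Bias2 : ℝ)
    (hP : P = (ATEf - ATEm) / Pf)
    (hδP : δP = ((ATEf + γf) - (ATEm + γm)) / (Pf - γf))
    (hB1 : Bias1 = Pf / (Pf - γf))
    (hB2 : Bias2 = (γf - γm) / (Pf - γf)) :
    δP = P * Bias1 + Bias2 :=
  stmt_5_general Pf γf γm ATEf ATEm hPf P δP Bias1 Bias2 hP hδP hB1 hB2
end

section
/- Let Pf, Pm, γf, γm, Rf, Rm be real numbers with Pf ≠ 0, Pm ≠ 0, Rm ≠ 0, Pm − γm ≠ 0, and suppose the NTD assumption γf/Pf = γm/Pm holds. Define the counterfactual gender earnings ratio ρ∞ = Pf/Pm, the realized gender earnings ratio ρd = Rf/Rm, the effect of parenthood on the gender earnings ratio Δρ = ρd − ρ∞, and the DID counterfactual means δAPO(f) = Pf − γf, δAPO(m) = Pm − γm. Then (Pf − γf)/(Pm − γm) = Pf/Pm, and consequently Δρ = Rf/Rm − δAPO(f)/δAPO(m). That is, the effect of parenthood on the gender earnings ratio is identified by the observed gender earnings ratio minus the ratio of the DID counterfactual means across genders. 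-/
/-! Under equal normalized trends the two DID counterfactual means are the true ones rescaled
by the same factor `1 - γ / P`, which cancels in their ratio. -/

theorem sub_div_sub_eq_div_of_div_eq {K : Type*} [Field K] {a b x y : K} (ha : a ≠ 0)
    (hb : b ≠ 0) (hxy : x / a = y / b) (hby : b - y ≠ 0) : (a - x) / (b - y) = a / b := by
  rw [div_eq_div_iff ha hb] at hxy
  rw [div_eq_div_iff hby hb]
  linear_combination -hxy

theorem stmt_7_general (Pf Pm γf γm Rf Rm : ℝ)
    (hPf : Pf ≠ 0) (hPm : Pm ≠ 0) (hm : Pm - γm ≠ 0)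
    (hNTD : γf / Pf = γm / Pm)
    (ρinf ρd Δρ δAPOf δAPOm : ℝ)
    (hρinf : ρinf = Pf / Pm) (hρd : ρd = Rf / Rm)
    (hΔρ : Δρ = ρd - ρinf)
    (hδAPOf : δAPOf = Pf - γf) (hδAPOm : δAPOm = Pm - γm) :
    (Pf - γf) / (Pm - γm) = Pf / Pm ∧ Δρ = Rf / Rm - δAPOf / δAPOm := by
  have hratio := sub_div_sub_eq_div_of_div_eq hPf hPm hNTD hm
  exact ⟨hratio, by rw [hΔρ, hρd, hρinf, hδAPOf, hδAPOm, hratio]⟩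

/-- Theorem 2 (identification of the effect of parenthood on the gender earnings ratio):
under Assumption NTD-PT, the gender ratio of DID counterfactual means equals the true
counterfactual gender earnings ratio, and hence the effect of parenthood on the gender
earnings ratio is identified by the observed gender earnings ratio minus the gender ratio
of DID counterfactual means. -/
theorem stmt_7 (Pf Pm γf γm Rf Rm : ℝ)
    (hPf : Pf ≠ 0) (hPm : Pm ≠ 0) (hRm : Rm ≠ 0) (hm : Pm - γm ≠ 0)
    (hNTD : γf / Pf = γm / Pm)
    (ρinf ρd Δρ δAPOf δAPOm : ℝ)
    (hρinf : ρinf = Pf / Pm) (hρd : ρd = Rf / Rm)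
    (hΔρ : Δρ = ρd - ρinf)
    (hδAPOf : δAPOf = Pf - γf) (hδAPOm : δAPOm = Pm - γm) :
    (Pf - γf) / (Pm - γm) = Pf / Pm ∧ Δρ = Rf / Rm - δAPOf / δAPOm :=
  stmt_7_general Pf Pm γf γm Rf Rm hPf hPm hm hNTD ρinf ρd Δρ δAPOf δAPOm hρinf hρd hΔρ hδAPOf
    hδAPOm
end
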